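/- arXiv:1901.08961 — 2 statements merged into one kernel-verified Lean document; each statement's English description precedes it below -/
import Mathlib

section
/- For any complete theory T of a relational language L, the following are equivalent: (1) T is 𝒯-approximated for some family 𝒯 of complete L-theories; (2) T is 𝒯-approximated for some countable family 𝒯 of complete L-theories; (3) either L has infinitely many relation symbols, or L has only finitely many relation symbols and T contains no L-complete sentence (no sentence φ ∈ T such that any two models of φ are elementarily equivalent). -/
open FirstOrder Language Set

universe u v

namespace Approx

variable {L : FirstOrder.Language.{u, v}}

/-- A complete theory: a satisfiable set of sentences deciding every sentence. -/
def CompleteTheory (T : L.Theory) : Prop :=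
  T.IsSatisfiable ∧ ∀ φ : L.Sentence, φ ∈ T ∨ φ.not ∈ T

/-- `T` is `𝒯`-approximated: `T ∉ 𝒯` and every sentence of `T` lies in some member of `𝒯`. -/
def Approximated (𝒯 : Set L.Theory) (T : L.Theory) : Prop :=
  T ∉ 𝒯 ∧ ∀ φ ∈ T, ∃ T' ∈ 𝒯, φ ∈ T'

/-- The `φ`-neighbourhood `𝒯_φ` of a family of theories. -/
def Nbhd (𝒯 : Set L.Theory) (φ : L.Sentence) : Set L.Theory :=
  {T' ∈ 𝒯 | φ ∈ T'}

/-- An accumulation point of `𝒯`: a complete theory each of whose sentences has an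
infinite neighbourhood in `𝒯`. -/
def AccPoint (𝒯 : Set L.Theory) (T : L.Theory) : Prop :=
  CompleteTheory T ∧ ∀ φ ∈ T, (Nbhd 𝒯 φ).Infinite

/-- The `E`-closure of `𝒯`: `𝒯` together with all its accumulation points. -/
def ClE (𝒯 : Set L.Theory) : Set L.Theory :=
  𝒯 ∪ {T | AccPoint 𝒯 T}

/-- A consistent sentence is `L`-complete if any two of its models are elementarily
equivalent (i.e. it forces a complete theory). -/
def LComplete {L : FirstOrder.Language.{u, v}} (φ : L.Sentence) : Prop :=
  (({φ} : L.Theory)).IsSatisfiable ∧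
    ∀ M N : Theory.ModelType.{u, v, max u v} ({φ} : L.Theory),
      (M : Type (max u v)) ≅[L] (N : Type (max u v))


lemma completeTheory_complete (M : Type (max u v)) [L.Structure M] [Nonempty M] :
    CompleteTheory (L.completeTheory M) :=
  ⟨completeTheory.isSatisfiable L M, completeTheory.mem_or_not_mem L M⟩

lemma eq_completeTheory {T : L.Theory} (hT : CompleteTheory T)
    (M : Type*) [L.Structure M] [M ⊨ T] : T = L.completeTheory M := by
  ext φ
  rw [mem_completeTheory]
  constructor
  · exact fun h => Theory.realize_sentence_of_mem T h
  · intro h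
    rcases hT.2 φ with h' | h'
    · exact h'
    · have := Theory.realize_sentence_of_mem (M := M) T h'
      rw [Sentence.realize_not] at this
      exact absurd h this

lemma complete_unique {T T' : L.Theory} (hT : CompleteTheory T) (hT' : CompleteTheory T')
    {φ : L.Sentence} (hφ : LComplete φ) (h1 : φ ∈ T) (h2 : φ ∈ T') : T = T' := by
  obtain ⟨M⟩ := hT.1
  obtain ⟨N⟩ := hT'.1
  haveI : (M : Type (max u v)) ⊨ ({φ} : L.Theory) :=
    (Theory.model_singleton_iff).2 (Theory.realize_sentence_of_mem T h1)
  haveI : (N : Type (max u v)) ⊨ ({φ} : L.Theory) :=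
    (Theory.model_singleton_iff).2 (Theory.realize_sentence_of_mem T' h2)
  have hMN := hφ.2 (Theory.ModelType.of _ M) (Theory.ModelType.of _ N)
  have e1 : T = L.completeTheory M := eq_completeTheory hT M
  have e2 : T' = L.completeTheory N := eq_completeTheory hT' N
  rw [e1, e2]
  exact hMN

lemma sentence_countable [L.IsRelational] [Finite (Σ n, L.Relations n)] :
    Countable L.Sentence := by
  haveI : IsEmpty (Σ l, L.Functions l) := ⟨fun x => isEmptyElim x.2⟩
  haveI : Countable (Σ n, L.BoundedFormula Empty n) :=
    (BoundedFormula.listEncode_sigma_injective (L := L) (α := Empty)).countable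
  exact Function.Injective.countable
    (f := fun φ : L.Sentence => (⟨0, φ⟩ : Σ n, L.BoundedFormula Empty n))
    (fun a b h => by simpa using h)

lemma caseB [L.IsRelational] [Finite (Σ n, L.Relations n)] {T : L.Theory}
    (hT : CompleteTheory T) (h : ¬ ∃ φ ∈ T, LComplete φ) :
    ∃ 𝒯 : Set L.Theory, 𝒯.Countable ∧ (∀ S ∈ 𝒯, CompleteTheory S) ∧ Approximated 𝒯 T := by
  push_neg at h
  obtain ⟨M⟩ := hT.1
  have key : ∀ φ ∈ T, ∃ S : L.Theory, CompleteTheory S ∧ φ ∈ S ∧ S ≠ T := by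
    intro φ hφ
    haveI : (M : Type (max u v)) ⊨ ({φ} : L.Theory) :=
      (Theory.model_singleton_iff).2 (Theory.realize_sentence_of_mem T hφ)
    have hsat : ({φ} : L.Theory).IsSatisfiable := ⟨Theory.ModelType.of _ M⟩
    have hnc := h φ hφ
    rw [LComplete, not_and] at hnc
    push_neg at hnc
    obtain ⟨A, B, hAB⟩ := hnc hsat
    have hABne : L.completeTheory A ≠ L.completeTheory B := hAB
    have hφA : φ ∈ L.completeTheory A :=
      mem_completeTheory.2 (Theory.realize_sentence_of_mem (M := A) _ (Set.mem_singleton φ))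
    have hφB : φ ∈ L.completeTheory B :=
      mem_completeTheory.2 (Theory.realize_sentence_of_mem (M := B) _ (Set.mem_singleton φ))
    by_cases hA : L.completeTheory A = T
    · exact ⟨L.completeTheory B, completeTheory_complete B, hφB,
        fun hB => hABne (hA.trans hB.symm)⟩
    · exact ⟨L.completeTheory A, completeTheory_complete A, hφA, hA⟩
  choose f hf1 hf2 hf3 using key
  classical
  let g : L.Sentence → L.Theory := fun φ => if hφ : φ ∈ T then f φ hφ else ∅
  haveI := sentence_countable (L := L)
  refine ⟨g '' T, (T.to_countable).image g, ?_, ?_, ?_⟩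
  · rintro S ⟨φ, hφ, rfl⟩
    simpa [g, dif_pos hφ] using hf1 φ hφ
  · rintro ⟨φ, hφ, hgφ⟩
    rw [show g φ = f φ hφ from dif_pos hφ] at hgφ
    exact hf3 φ hφ hgφ
  · intro φ hφ
    exact ⟨g φ, ⟨φ, hφ, rfl⟩, by rw [show g φ = f φ hφ from dif_pos hφ]; exact hf2 φ hφ⟩

variable [L.IsRelational]

/-- The language `L` with one relation symbol removed. -/
def omitLang (r : Σ n, L.Relations n) : FirstOrder.Language.{u, v} where
  Functions := fun _ => PEmpty
  Relations := fun n => {R : L.Relations n // Sigma.mk n R ≠ r}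

instance (r : Σ n, L.Relations n) : (omitLang r).IsRelational :=
  fun _ => inferInstanceAs (IsEmpty PEmpty)

/-- Inclusion of the smaller language. -/
def omitIncl (r : Σ n, L.Relations n) : omitLang r →ᴸ L where
  onFunction := fun {_} f => f.elim
  onRelation := fun {_} R => R.1

lemma term_eq_var {L' : FirstOrder.Language.{u,v}} [L'.IsRelational] {α : Type*} (t : L'.Term α) :
    ∃ x, t = Term.var x := by
  cases t with
  | var x => exact ⟨x, rfl⟩
  | func f ts => exact isEmptyElim f

lemma bad_finite (e : ℕ ↪ Σ n, L.Relations n) {m : ℕ} (φ : L.BoundedFormula Empty m) :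
    {k : ℕ | ¬ ∃ ψ : (omitLang (e k)).BoundedFormula Empty m,
      (omitIncl (e k)).onBoundedFormula ψ = φ}.Finite := by
  induction φ with
  | falsum =>
    refine Set.finite_empty.subset fun k hk => ?_
    exact absurd ⟨BoundedFormula.falsum, rfl⟩ hk
  | equal t₁ t₂ =>
    refine Set.finite_empty.subset fun k hk => ?_
    obtain ⟨x₁, rfl⟩ := term_eq_var t₁
    obtain ⟨x₂, rfl⟩ := term_eq_var t₂
    exact absurd ⟨BoundedFormula.equal (Term.var x₁) (Term.var x₂), rfl⟩ hk
  | @rel m' ℓ R ts =>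
    have : {k : ℕ | ¬ ∃ ψ : (omitLang (e k)).BoundedFormula Empty m',
        (omitIncl (e k)).onBoundedFormula ψ = BoundedFormula.rel R ts} ⊆
        {k : ℕ | e k = ⟨ℓ, R⟩} := by
      intro k hk
      by_contra hne
      refine hk ⟨BoundedFormula.rel (⟨R, fun hh => hne hh.symm⟩ : (omitLang (e k)).Relations ℓ)
        (fun i => Term.var (term_eq_var (ts i)).choose), ?_⟩
      simp only [LHom.onBoundedFormula]
      show BoundedFormula.rel R _ = BoundedFormula.rel R ts
      congr 1
      funext i
      exact ((term_eq_var (ts i)).choose_spec).symm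
    refine Set.Finite.subset ?_ this
    apply Set.Subsingleton.finite
    intro k1 h1 k2 h2
    exact e.injective (h1.trans h2.symm)
  | imp f₁ f₂ ih₁ ih₂ =>
    refine (ih₁.union ih₂).subset fun k hk => ?_
    by_contra hkn
    simp only [Set.mem_union, Set.mem_setOf_eq, not_or, not_not] at hkn
    obtain ⟨⟨ψ₁, h1⟩, ⟨ψ₂, h2⟩⟩ := hkn
    exact hk ⟨ψ₁.imp ψ₂, by simp [h1, h2]⟩
  | all f ih =>
    refine ih.subset fun k hk => ?_
    by_contra hkn
    simp only [Set.mem_setOf_eq, not_not] at hkn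
    obtain ⟨ψ, h1⟩ := hkn
    exact hk ⟨ψ.all, by simp [h1]⟩

/-- Tweaked structure: reinterpret the relation `r` as constantly true iff it was not
constantly true. -/
def tweak (M : Type*) [L.Structure M] (r : Σ n, L.Relations n) :
    L.Structure M where
  funMap := fun {_} f => isEmptyElim f
  RelMap := fun {n} R x =>
    (Sigma.mk n R = r ∧ ¬ (∀ y : Fin r.1 → M, Structure.RelMap r.2 y)) ∨
      (Sigma.mk n R ≠ r ∧ Structure.RelMap R x)

lemma reduct_tweak_eq (M : Type*) [I : L.Structure M] (r : Σ n, L.Relations n) :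
    (omitIncl r).reduct M = @LHom.reduct _ _ (omitIncl r) M (tweak M r) := by
  show Structure.mk _ _ = Structure.mk _ _
  congr 1
  · funext n f
    exact isEmptyElim f
  · funext n R x
    show Structure.RelMap ((omitIncl r).onRelation R) x =
      @Structure.RelMap _ _ (tweak M r) _ ((omitIncl r).onRelation R) x
    show Structure.RelMap R.1 x = ((Sigma.mk n R.1 = r ∧ _) ∨ (Sigma.mk n R.1 ≠ r ∧ Structure.RelMap R.1 x))
    simp [R.2]

lemma realize_tweak_iff (M : Type*) [I : L.Structure M] (r : Σ n, L.Relations n)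
    {φ : L.Sentence}
    (h : ∃ ψ : (omitLang r).Sentence, (omitIncl r).onSentence ψ = φ) :
    (@Sentence.Realize L M (tweak M r) φ) ↔ M ⊨ φ := by
  obtain ⟨ψ, rfl⟩ := h
  have h1 : M ⊨ (omitIncl r).onSentence ψ ↔
      @Sentence.Realize _ M ((omitIncl r).reduct M) ψ :=
    @LHom.realize_onSentence _ _ M ((omitIncl r).reduct M) I (omitIncl r)
      (@LHom.isExpansionOn_reduct _ _ (omitIncl r) M I) ψ
  have h2 : (@Sentence.Realize L M (tweak M r) ((omitIncl r).onSentence ψ)) ↔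
      @Sentence.Realize _ M (@LHom.reduct _ _ (omitIncl r) M (tweak M r)) ψ :=
    @LHom.realize_onSentence _ _ M (@LHom.reduct _ _ (omitIncl r) M (tweak M r)) (tweak M r)
      (omitIncl r) (@LHom.isExpansionOn_reduct _ _ (omitIncl r) M (tweak M r)) ψ
  rw [← reduct_tweak_eq M r] at h2
  rw [h1, h2]

/-- The distinguishing sentence `∀ x, r x`. -/
def allRel (r : Σ n, L.Relations n) : L.Sentence :=
  (BoundedFormula.rel r.2 (fun i => Term.var (Sum.inr i))).alls

lemma realize_allRel_iff (M : Type*) [I : L.Structure M] (r : Σ n, L.Relations n) :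
    M ⊨ allRel r ↔ ∀ y : Fin r.1 → M, Structure.RelMap r.2 y := by
  have h0 : M ⊨ allRel r ↔ ∀ y : Fin r.1 → M,
      (BoundedFormula.rel r.2 (fun i => Term.var (Sum.inr i))).Realize
        (default : Empty → M) y :=
    BoundedFormula.realize_alls
  rw [h0]
  refine forall_congr' fun y => ?_
  simp [BoundedFormula.Realize, Term.realize]

lemma realize_allRel_tweak_iff (M : Type*) [I : L.Structure M] [Nonempty M]
    (r : Σ n, L.Relations n) :
    (@Sentence.Realize L M (tweak M r) (allRel r)) ↔
      ¬ (∀ y : Fin r.1 → M, Structure.RelMap r.2 y) := by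
  rw [@realize_allRel_iff L _ M (tweak M r) r]
  have hr : ∀ y : Fin r.1 → M, (@Structure.RelMap L M (tweak M r) r.1 r.2 y ↔
      ¬ (∀ z : Fin r.1 → M, Structure.RelMap r.2 z)) := by
    intro y
    show ((Sigma.mk r.1 r.2 = r ∧ _) ∨ (Sigma.mk r.1 r.2 ≠ r ∧ _)) ↔ _
    simp [Sigma.eta]
  constructor
  · intro h
    exact (hr Classical.ofNonempty).1 (h _)
  · intro h y
    exact (hr y).2 h


lemma caseA [Infinite (Σ n, L.Relations n)] {T : L.Theory}
    (hT : CompleteTheory T) :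
    ∃ 𝒯 : Set L.Theory, 𝒯.Countable ∧ (∀ S ∈ 𝒯, CompleteTheory S) ∧ Approximated 𝒯 T := by
  obtain ⟨M⟩ := hT.1
  let e : ℕ ↪ Σ n, L.Relations n := Infinite.natEmbedding _
  let Th : ℕ → L.Theory := fun k =>
    @Language.completeTheory L M (tweak (M : Type (max u v)) (e k))
  have hTM : T = L.completeTheory M := eq_completeTheory hT M
  have hmem : ∀ k (φ : L.Sentence), φ ∈ Th k ↔
      @Sentence.Realize L M (tweak (M : Type (max u v)) (e k)) φ := fun _ _ => Iff.rfl
  have hne : ∀ k, Th k ≠ T := by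
    intro k hk
    have h1 := realize_allRel_tweak_iff (M : Type (max u v)) (e k)
    have h2 := realize_allRel_iff (M : Type (max u v)) (e k)
    have hA := hmem k (allRel (e k))
    have hB : allRel (e k) ∈ T ↔ (M : Type (max u v)) ⊨ allRel (e k) :=
      (Set.ext_iff.1 hTM (allRel (e k))).trans mem_completeTheory
    rw [hk] at hA
    tauto
  refine ⟨Set.range Th, Set.countable_range Th, ?_, ?_, ?_⟩
  · rintro S ⟨k, rfl⟩
    exact @completeTheory_complete L (M : Type (max u v))
      (tweak (M : Type (max u v)) (e k)) M.nonempty'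
  · rintro ⟨k, hk⟩
    exact hne k hk
  · intro φ hφ
    have hb := bad_finite e (φ : L.BoundedFormula Empty 0)
    obtain ⟨k, hk⟩ := (hb.infinite_compl).nonempty
    rw [Set.mem_compl_iff, Set.mem_setOf_eq, not_not] at hk
    refine ⟨Th k, ⟨k, rfl⟩, ?_⟩
    rw [hmem, realize_tweak_iff (M : Type (max u v)) (e k) hk]
    exact Theory.realize_sentence_of_mem T hφ

/-- for a complete theory `T` of a relational language the following are
equivalent: (1) `T` is `𝒯`-approximated for some family of complete theories; (2) `T` is
`𝒯`-approximated for some countable family of complete theories; (3) either the language is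
finite and `T` contains no `L`-complete sentence, or the language is infinite. -/
theorem lambda_approximable_tfae
    {L : FirstOrder.Language.{u, v}} [L.IsRelational]
    (T : L.Theory) (hT : CompleteTheory T) :
    List.TFAE
      [ ∃ 𝒯 : Set L.Theory, (∀ S ∈ 𝒯, CompleteTheory S) ∧ Approximated 𝒯 T,
        ∃ 𝒯 : Set L.Theory, 𝒯.Countable ∧ (∀ S ∈ 𝒯, CompleteTheory S) ∧ Approximated 𝒯 T,
        (Finite (Σ n, L.Relations n) ∧ ¬ ∃ φ ∈ T, LComplete φ) ∨
          Infinite (Σ n, L.Relations n) ] := by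
  tfae_have 2 → 1
  | ⟨𝒯, _, hC, hA⟩ => ⟨𝒯, hC, hA⟩
  tfae_have 1 → 3
  | ⟨𝒯, hC, hnotin, happ⟩ => by
    rcases finite_or_infinite (Σ n, L.Relations n) with hfin | hinf
    · refine Or.inl ⟨hfin, ?_⟩
      rintro ⟨φ, hφT, hφLC⟩
      obtain ⟨T', hT'𝒯, hφT'⟩ := happ φ hφT
      refine hnotin ?_
      rw [complete_unique hT (hC T' hT'𝒯) hφLC hφT hφT']
      exact hT'𝒯
    · exact Or.inr hinf
  tfae_have 3 → 2
  | h => by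
    rcases h with ⟨hfin, hnc⟩ | hinf
    · exact caseB hT hnc
    · exact caseA hT
  tfae_finish

end Approx
end

section
/- Let 𝒯 be an E-closed family of complete theories whose set of accumulation points is finite and nonempty, of size n. Then 𝒯 can be represented as a disjoint union of n subfamilies 𝒯₁, …, 𝒯ₙ (pairwise disjoint, with union 𝒯) each of which is e-categorical, i.e., each 𝒯_k has exactly one accumulation point. -/
/-!
Distinct complete theories are separated by a sentence, so the accumulation points
`T₁, …, Tₙ` of `𝒯` contain pairwise inconsistent sentences `χᵢ ∈ Tᵢ`. Let `𝒯ᵢ` consist of the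
members of `𝒯` containing `χᵢ`, the members containing no `χⱼ` being added to `𝒯₁`. For
`θ ∈ Tᵢ`, the infinitely many members of `𝒯` containing `θ ∧ χᵢ` all lie in `𝒯ᵢ`, so `Tᵢ` is an
accumulation point of `𝒯ᵢ`. Conversely an accumulation point of `𝒯ᵢ` is one of `𝒯`, say `Tⱼ`,
and then some member of `𝒯ᵢ` contains `χⱼ`, which forces `j = i`.
-/

open FirstOrder Language Set

universe u v

namespace Approx

variable {L : FirstOrder.Language.{u, v}}

variable {S S' : L.Theory} {φ ψ : L.Sentence}

namespace CompleteTheory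

theorem eq_completeTheory (hS : CompleteTheory S) (M : S.ModelType) :
    S = L.completeTheory M := by
  ext φ
  refine ⟨fun h => mem_completeTheory.2 (S.realize_sentence_of_mem h), fun h => ?_⟩
  refine (hS.2 φ).resolve_right fun hnot => ?_
  exact (Sentence.realize_not M).1 (S.realize_sentence_of_mem hnot) (mem_completeTheory.1 h)

theorem not_mem_iff (hS : CompleteTheory S) : φ.not ∈ S ↔ φ ∉ S := by
  obtain ⟨M⟩ := hS.1
  simp only [hS.eq_completeTheory M, mem_completeTheory, Sentence.realize_not]

theorem inf_mem_iff (hS : CompleteTheory S) : φ ⊓ ψ ∈ S ↔ φ ∈ S ∧ ψ ∈ S := by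
  obtain ⟨M⟩ := hS.1
  simp only [hS.eq_completeTheory M, mem_completeTheory, Sentence.realize_inf]

theorem iInf_mem_iff {β : Type*} [Finite β] (hS : CompleteTheory S) (f : β → L.Sentence) :
    Formula.iInf f ∈ S ↔ ∀ b, f b ∈ S := by
  obtain ⟨M⟩ := hS.1
  simp only [hS.eq_completeTheory M, mem_completeTheory, Sentence.Realize, Formula.realize_iInf]

theorem eq_of_subset (hS : CompleteTheory S) (hS' : CompleteTheory S') (h : S ⊆ S') :
    S = S' := by
  refine h.antisymm fun φ hφ => (hS.2 φ).resolve_right fun hnot => ?_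
  exact (hS'.not_mem_iff.1 (h hnot)) hφ

end CompleteTheory

section Separation

variable {ι : Type*} {T : ι → L.Theory}

theorem exists_isolating_sentences [Finite ι] (hT : ∀ i, CompleteTheory (T i))
    (hinj : Function.Injective T) : ∃ φ : ι → L.Sentence, ∀ i j, φ i ∈ T j ↔ i = j := by
  have hsep : ∀ i j, i ≠ j → ∃ ψ, ψ ∈ T i ∧ ψ ∉ T j := fun i j hij =>
    Set.not_subset.1 fun hsub => hij (hinj ((hT i).eq_of_subset (hT j) hsub))
  choose ψ hψT hψ using hsep
  refine ⟨fun i => Formula.iInf fun j : {j // i ≠ j} => ψ i j j.2, fun i j => ?_⟩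
  rw [(hT j).iInf_mem_iff]
  refine ⟨fun h => by_contra fun hij => hψ i j hij (h ⟨j, hij⟩), ?_⟩
  rintro rfl k
  exact hψT i k k.2

/-- Each `χ i` is the isolating sentence of `T i` together with the negations of those of the
earlier `T k`, which makes the `χ i` pairwise inconsistent. -/
theorem exists_exclusive_sentences [Finite ι] [LinearOrder ι] (hT : ∀ i, CompleteTheory (T i))
    (hinj : Function.Injective T) :
    ∃ χ : ι → L.Sentence, (∀ i, χ i ∈ T i) ∧
      ∀ S, CompleteTheory S → ∀ i j, χ i ∈ S → χ j ∈ S → i = j := by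
  obtain ⟨φ, hφ⟩ := exists_isolating_sentences hT hinj
  have hχ : ∀ {S} (hS : CompleteTheory S) i,
      φ i ⊓ Formula.iInf (fun k : {k // k < i} => (φ k).not) ∈ S ↔
        φ i ∈ S ∧ ∀ k < i, φ k ∉ S := by
    intro S hS i
    simp only [hS.inf_mem_iff, hS.iInf_mem_iff, hS.not_mem_iff, Subtype.forall]
  refine ⟨fun i => φ i ⊓ Formula.iInf (fun k : {k // k < i} => (φ k).not), fun i => ?_, ?_⟩
  · exact (hχ (hT i) i).2 ⟨(hφ i i).2 rfl, fun k hk h => hk.ne ((hφ k i).1 h)⟩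
  · intro S hS i j hi hj
    rw [hχ hS] at hi hj
    rcases lt_trichotomy i j with hij | hij | hij
    · exact absurd hi.1 (hj.2 i hij)
    · exact hij
    · exact absurd hj.1 (hi.2 j hij)

end Separation

section Accumulation

variable {𝒯 𝒯' : Set L.Theory} {T : L.Theory}

theorem AccPoint.mono (h : 𝒯 ⊆ 𝒯') (hT : AccPoint 𝒯 T) : AccPoint 𝒯' T :=
  ⟨hT.1, fun φ hφ => (hT.2 φ hφ).mono fun _ hS => ⟨h hS.1, hS.2⟩⟩

theorem AccPoint.of_nbhd_subset (h𝒯 : ∀ S ∈ 𝒯, CompleteTheory S) (hT : AccPoint 𝒯 T)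
    {χ : L.Sentence} (hχ : χ ∈ T) (hsub : Nbhd 𝒯 χ ⊆ 𝒯') : AccPoint 𝒯' T := by
  refine ⟨hT.1, fun θ hθ => ?_⟩
  refine (hT.2 (θ ⊓ χ) (hT.1.inf_mem_iff.2 ⟨hθ, hχ⟩)).mono ?_
  rintro S ⟨hS𝒯, hSθχ⟩
  obtain ⟨hSθ, hSχ⟩ := (h𝒯 S hS𝒯).inf_mem_iff.1 hSθχ
  exact ⟨hsub ⟨hS𝒯, hSχ⟩, hSθ⟩

end Accumulation

section Partition

variable {ι : Type*} {𝒯 : Set L.Theory} {χ : ι → L.Sentence} {i₀ : ι}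

def sentencePartition (𝒯 : Set L.Theory) (χ : ι → L.Sentence) (i₀ i : ι) : Set L.Theory :=
  {S ∈ 𝒯 | χ i ∈ S ∨ (i = i₀ ∧ ∀ j, χ j ∉ S)}

theorem sentencePartition_subset (i : ι) : sentencePartition 𝒯 χ i₀ i ⊆ 𝒯 :=
  fun _ hS => hS.1

theorem nbhd_subset_sentencePartition (i : ι) : Nbhd 𝒯 (χ i) ⊆ sentencePartition 𝒯 χ i₀ i :=
  fun _ hS => ⟨hS.1, Or.inl hS.2⟩

theorem iUnion_sentencePartition : ⋃ i, sentencePartition 𝒯 χ i₀ i = 𝒯 := by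
  refine (iUnion_subset sentencePartition_subset).antisymm fun S hS => ?_
  by_cases h : ∃ j, χ j ∈ S
  · obtain ⟨j, hj⟩ := h
    exact mem_iUnion.2 ⟨j, hS, Or.inl hj⟩
  · exact mem_iUnion.2 ⟨i₀, hS, Or.inr ⟨rfl, not_exists.1 h⟩⟩

variable (hχ : ∀ S ∈ 𝒯, ∀ i j, χ i ∈ S → χ j ∈ S → i = j)
include hχ

theorem eq_of_mem_sentencePartition {S : L.Theory} {i j : ι}
    (hS : S ∈ sentencePartition 𝒯 χ i₀ i) (hj : χ j ∈ S) : j = i := by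
  rcases hS with ⟨hS𝒯, hi | ⟨-, hnone⟩⟩
  · exact hχ S hS𝒯 j i hj hi
  · exact absurd hj (hnone j)

open Function in
theorem pairwise_disjoint_sentencePartition :
    Pairwise (Disjoint on sentencePartition 𝒯 χ i₀) := by
  intro i j hij
  refine Set.disjoint_left.2 fun S hSi hSj => hij ?_
  obtain ⟨-, hi | ⟨rfl, hnone⟩⟩ := hSi
  · exact eq_of_mem_sentencePartition hχ hSj hi
  · obtain ⟨-, hj | ⟨rfl, -⟩⟩ := hSj
    · exact absurd hj (hnone j)
    · rfl

theorem accPoint_sentencePartition_iff (h𝒯 : ∀ S ∈ 𝒯, CompleteTheory S) {T : ι → L.Theory}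
    (hacc : ∀ i, AccPoint 𝒯 (T i)) (hsurj : ∀ U, AccPoint 𝒯 U → ∃ j, T j = U)
    (hχT : ∀ i, χ i ∈ T i) (i : ι) {U : L.Theory} :
    AccPoint (sentencePartition 𝒯 χ i₀ i) U ↔ U = T i := by
  refine ⟨fun hU => ?_, ?_⟩
  · obtain ⟨j, rfl⟩ := hsurj U (hU.mono (sentencePartition_subset i))
    obtain ⟨S, hS, hSχ⟩ := (hU.2 (χ j) (hχT j)).nonempty
    rw [eq_of_mem_sentencePartition hχ hS hSχ]
  · rintro rfl
    exact (hacc i).of_nbhd_subset h𝒯 (hχT i) (nbhd_subset_sentencePartition i)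

end Partition

theorem partition_into_eCategorical_general
    {L : FirstOrder.Language.{u, v}}
    (𝒯 : Set L.Theory) (h𝒯 : ∀ S ∈ 𝒯, CompleteTheory S)
    (n : ℕ) (hn : 0 < n)
    (hcard : {T : L.Theory | AccPoint 𝒯 T}.ncard = n) :
    ∃ 𝒯s : Fin n → Set L.Theory,
      (∀ i j, i ≠ j → Disjoint (𝒯s i) (𝒯s j)) ∧
      (⋃ i, 𝒯s i) = 𝒯 ∧
      ∀ i, ∃! T : L.Theory, AccPoint (𝒯s i) T := by
  have : Finite {T : L.Theory | AccPoint 𝒯 T} := (finite_of_ncard_pos (hcard ▸ hn)).to_subtype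
  let e := Finite.equivFinOfCardEq hcard
  let T : Fin n → L.Theory := fun i => e.symm i
  have hacc : ∀ i, AccPoint 𝒯 (T i) := fun i => (e.symm i).2
  have hsurj : ∀ U, AccPoint 𝒯 U → ∃ i, T i = U := fun U hU => ⟨e ⟨U, hU⟩, by simp [T]⟩
  obtain ⟨χ, hχT, hχ⟩ := exists_exclusive_sentences (fun i => (hacc i).1)
    (Subtype.val_injective.comp e.symm.injective)
  have hχ𝒯 : ∀ S ∈ 𝒯, ∀ i j, χ i ∈ S → χ j ∈ S → i = j := fun S hS => hχ S (h𝒯 S hS)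
  have hpiece := accPoint_sentencePartition_iff (i₀ := ⟨0, hn⟩) hχ𝒯 h𝒯 hacc hsurj hχT
  exact ⟨sentencePartition 𝒯 χ ⟨0, hn⟩, pairwise_disjoint_sentencePartition hχ𝒯,
    iUnion_sentencePartition, fun i => ⟨T i, (hpiece i).2 rfl, fun _ => (hpiece i).1⟩⟩

/-- an `E`-closed family `𝒯` whose set of accumulation points is finite and
nonempty of size `n` is a disjoint union of `n` `e`-categorical subfamilies. -/
theorem partition_into_eCategorical
    {L : FirstOrder.Language.{u, v}} [L.IsRelational]
    (𝒯 : Set L.Theory) (h𝒯 : ∀ S ∈ 𝒯, CompleteTheory S)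
    (hclosed : ClE 𝒯 = 𝒯) (n : ℕ) (hn : 0 < n)
    (hfin : {T : L.Theory | AccPoint 𝒯 T}.Finite)
    (hcard : {T : L.Theory | AccPoint 𝒯 T}.ncard = n) :
    ∃ 𝒯s : Fin n → Set L.Theory,
      (∀ i j, i ≠ j → Disjoint (𝒯s i) (𝒯s j)) ∧
      (⋃ i, 𝒯s i) = 𝒯 ∧
      ∀ i, ∃! T : L.Theory, AccPoint (𝒯s i) T :=
  partition_into_eCategorical_general 𝒯 h𝒯 n hn hcard

end Approx
end
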